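/- For every p ∈ ℝ³ one has ∫_{ℝ³} (|k|² (|p−k|² + 1))⁻¹ dk ≤ ∫_{ℝ³} (|k|² (|k|² + 1))⁻¹ dk, and the right-hand side is finite (it equals 2π²). -/

import Mathlib

noncomputable section

open MeasureTheory Complex Real
open scoped RealInnerProductSpace ENNReal BigOperators ComplexConjugate

abbrev E3 : Type := EuclideanSpace ℝ (Fin 3)

/-- The `L²` norm of a function on `ℝ³`, as a real number. -/
def l2 (f : E3 → ℂ) : ℝ := (eLpNorm f 2 volume).toReal

/-- The potential `V_φ(x) = ∫ |k|⁻¹ (φ(k) e^{ik·x} + conj(φ(k)) e^{-ik·x}) dk`. -/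
def Vpot (φ : E3 → ℂ) (x : E3) : ℂ :=
  ∫ k : E3, (‖k‖⁻¹ : ℝ) •
    (φ k * Complex.exp (Complex.I * ((⟪k, x⟫ : ℝ) : ℂ)) +
      conj (φ k) * Complex.exp (-(Complex.I * ((⟪k, x⟫ : ℝ) : ℂ))))

/-- `σ_f(k) = |k|⁻¹ ∫ e^{-ik·x} |f(x)|² dx`. -/
def sigmaF (f : E3 → ℂ) (k : E3) : ℂ :=
  ((‖k‖⁻¹ : ℝ) : ℂ) *
    ∫ x : E3, Complex.exp (-(Complex.I * ((⟪k, x⟫ : ℝ) : ℂ))) * ((‖f x‖ ^ 2 : ℝ) : ℂ)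

/-- The potential pairing `⟨f, V_φ f⟩ = 2 Re ⟨σ_f, φ⟩_{L²}`. -/
def pairV (φ f : E3 → ℂ) : ℝ := 2 * (∫ k : E3, conj (sigmaF f k) * φ k).re

/-- `g` is the distributional (weak) gradient of `ψ`, tested against Schwartz functions. -/
def IsWeakGrad (ψ : E3 → ℂ) (g : Fin 3 → E3 → ℂ) : Prop :=
  ∀ (η : SchwartzMap E3 ℂ) (i : Fin 3),
    (∫ x : E3, ψ x * fderiv ℝ (⇑η) x (EuclideanSpace.single i 1))
      = - ∫ x : E3, g i x * η x

/-- `ψ ∈ H¹(ℝ³)` with weak gradient `g`. -/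
structure InH1 (ψ : E3 → ℂ) (g : Fin 3 → E3 → ℂ) : Prop where
  memL2 : MemLp ψ 2 volume
  grad_memL2 : ∀ i, MemLp (g i) 2 volume
  weak : IsWeakGrad ψ g

/-- `‖∇ψ‖₂²` in terms of the weak gradient `g`. -/
def gradSq (g : Fin 3 → E3 → ℂ) : ℝ := ∑ i : Fin 3, (l2 (g i)) ^ 2

/-- `‖∇ψ‖₂`. -/
def gradNorm (g : Fin 3 → E3 → ℂ) : ℝ := Real.sqrt (gradSq g)

/-- `‖ψ‖²_{H¹} = ‖ψ‖₂² + ‖∇ψ‖₂²`. -/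
def h1Sq (ψ : E3 → ℂ) (g : Fin 3 → E3 → ℂ) : ℝ := (l2 ψ) ^ 2 + gradSq g

/-- `‖ψ‖_{H¹}`. -/
def h1norm (ψ : E3 → ℂ) (g : Fin 3 → E3 → ℂ) : ℝ := Real.sqrt (h1Sq ψ g)

/-- The Schrödinger quadratic form `Q_φ(ψ) = ‖∇ψ‖₂² + ⟨ψ, V_φ ψ⟩`. -/
def Qform (φ ψ : E3 → ℂ) (g : Fin 3 → E3 → ℂ) : ℝ := gradSq g + pairV φ ψ



section RearrangementAux
open MeasureTheory Measure Set Metric Real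
open scoped ENNReal

lemma vol_ball_one : (volume : Measure E3) (Metric.ball 0 1) = ENNReal.ofReal (4 * π / 3) := by
  rw [EuclideanSpace.volume_ball]
  norm_num [Fintype.card_fin]
  rw [show (5:ℝ)/2 = 1/2 + 1 + 1 by ring, Real.Gamma_add_one (by positivity),
    Real.Gamma_add_one (by norm_num), Real.Gamma_one_half_eq]
  congr 1
  rw [show Real.sqrt π ^ 3 = π * Real.sqrt π by
    rw [pow_succ, sq, Real.mul_self_sqrt pi_pos.le]]
  field_simp; ring

lemma eval_rhs : (∫⁻ k : E3, ENNReal.ofReal ((‖k‖^2 * (‖k‖^2 + 1))⁻¹)) = ENNReal.ofReal (2 * π^2) := by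
  set F : ℝ → ℝ≥0∞ := fun r => ENNReal.ofReal ((r^2 * (r^2+1))⁻¹) with hF
  have hFm : Measurable F := by
    apply ENNReal.measurable_ofReal.comp; fun_prop
  have h1 := (Measure.measurePreserving_homeomorphUnitSphereProd
      (volume : Measure E3)).lintegral_comp
      (f := fun y : sphere (0:E3) 1 × Ioi (0:ℝ) => F y.2.1) (by fun_prop)
  calc (∫⁻ k : E3, ENNReal.ofReal ((‖k‖^2 * (‖k‖^2 + 1))⁻¹))
      = ∫⁻ x : ({0}ᶜ : Set E3), F ‖x.1‖ ∂((volume : Measure E3).comap Subtype.val) :=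
        ((lintegral_subtype_comap (measurableSet_singleton (0:E3)).compl
            (fun k => F ‖k‖)).trans (by rw [MeasureTheory.restrict_compl_singleton])).symm
    _ = ∫⁻ x : ({0}ᶜ : Set E3), (fun y : sphere (0:E3) 1 × Ioi (0:ℝ) => F y.2.1)
          (homeomorphUnitSphereProd E3 x) ∂((volume : Measure E3).comap Subtype.val) :=
        lintegral_congr fun x => by simp [homeomorphUnitSphereProd_apply_snd_coe]
    _ = ∫⁻ y : sphere (0:E3) 1 × Ioi (0:ℝ), F y.2.1
          ∂((volume : Measure E3).toSphere.prod
            (Measure.volumeIoiPow (Module.finrank ℝ E3 - 1))) := h1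
    _ = (volume : Measure E3).toSphere univ
          * ∫⁻ r : Ioi (0:ℝ), F r.1 ∂(Measure.volumeIoiPow (Module.finrank ℝ E3 - 1)) := by
        rw [MeasureTheory.lintegral_prod _ (by fun_prop)]
        rw [show (fun x : sphere (0:E3) 1 =>
              ∫⁻ y : Ioi (0:ℝ), F ((x, y).2).1 ∂(Measure.volumeIoiPow (Module.finrank ℝ E3 - 1)))
            = fun _ => ∫⁻ r : Ioi (0:ℝ), F r.1
                ∂(Measure.volumeIoiPow (Module.finrank ℝ E3 - 1)) from rfl]
        rw [lintegral_const, mul_comm]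
    _ = ENNReal.ofReal (4 * π) * ∫⁻ r in Ioi (0:ℝ), ENNReal.ofReal (r^2) * F r := by
      congr 1
      · rw [Measure.toSphere_apply_univ, vol_ball_one, finrank_euclideanSpace_fin]
        rw [show ((3:ℕ):ℝ≥0∞) = ENNReal.ofReal 3 by simp, ← ENNReal.ofReal_mul (by norm_num)]
        congr 1; ring
      · rw [show Module.finrank ℝ E3 - 1 = 2 from by rw [finrank_euclideanSpace_fin],
          Measure.volumeIoiPow,
          lintegral_withDensity_eq_lintegral_mul _ (by fun_prop) (by fun_prop)]
        simp only [Pi.mul_apply]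
        exact lintegral_subtype_comap measurableSet_Ioi (fun r => ENNReal.ofReal (r^2) * F r)
    _ = ENNReal.ofReal (4 * π) * ∫⁻ r in Ioi (0:ℝ), ENNReal.ofReal ((r^2+1)⁻¹) := by
      congr 1
      refine setLIntegral_congr_fun measurableSet_Ioi (fun r hr => ?_)
      rw [hF, ← ENNReal.ofReal_mul (by positivity)]
      congr 1
      have h2 : r ≠ 0 := ne_of_gt hr
      field_simp
    _ = ENNReal.ofReal (4 * π) * ENNReal.ofReal (π/2) := by
      congr 1
      rw [← ofReal_integral_eq_lintegral_ofReal]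
      · rw [show (fun r : ℝ => (r^2+1)⁻¹) = (fun r : ℝ => (1+r^2)⁻¹) by funext r; ring_nf]
        simp [integral_Ioi_inv_one_add_sq, arctan_zero]
      · have := integrable_inv_one_add_sq.integrableOn (s := Ioi (0:ℝ))
        exact (by simpa [add_comm] using this : IntegrableOn (fun x : ℝ => (x ^ 2 + 1)⁻¹) (Ioi 0) volume)
      · filter_upwards with r; positivity
    _ = ENNReal.ofReal (2 * π^2) := by
      rw [← ENNReal.ofReal_mul (by positivity)]
      congr 1; ring

lemma measure_inter_ball_le (p : E3) {s t : ℝ} (hs : 0 < s) (ht : 0 < t) :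
    volume {k : E3 | s < (‖k‖^2)⁻¹ ∧ t < (‖p - k‖^2 + 1)⁻¹}
      ≤ volume {k : E3 | s < (‖k‖^2)⁻¹ ∧ t < (‖k‖^2 + 1)⁻¹} := by
  set a := Real.sqrt s⁻¹ with ha
  set b := Real.sqrt (t⁻¹ - 1) with hb
  have hA : ∀ k : E3, (s < (‖k‖^2)⁻¹ ↔ ‖k‖ < a ∧ k ≠ 0) := by
    intro k
    rcases eq_or_ne k 0 with rfl | hk
    · simp [hs.not_gt]
    · have hk' : 0 < ‖k‖ := norm_pos_iff.2 hk
      rw [lt_inv_comm₀ hs (by positivity), ha, ← Real.lt_sqrt (norm_nonneg k)]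
      simp [hk]
  have hB : ∀ k : E3, (t < (‖k‖^2 + 1)⁻¹ ↔ ‖k‖ < b) := by
    intro k
    rw [lt_inv_comm₀ ht (by positivity), hb, Real.lt_sqrt (norm_nonneg k)]
    constructor
    · intro h; linarith
    · intro h; linarith
  have hset1 : {k : E3 | s < (‖k‖^2)⁻¹ ∧ t < (‖p - k‖^2 + 1)⁻¹}
      = (ball (0:E3) a \ {0}) ∩ ((fun k => p - k) ⁻¹' ball (0:E3) b) := by
    ext k
    simp only [mem_setOf_eq, hA, hB, mem_inter_iff, mem_diff, mem_ball, dist_zero_right,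
      mem_singleton_iff, mem_preimage]
  have hset2 : {k : E3 | s < (‖k‖^2)⁻¹ ∧ t < (‖k‖^2 + 1)⁻¹}
      = ball (0:E3) (min a b) \ {0} := by
    ext k
    simp only [mem_setOf_eq, hA, hB, mem_diff, mem_ball, dist_zero_right,
      mem_singleton_iff, lt_min_iff]
    tauto
  rw [hset1, hset2, measure_diff_null (measure_singleton _)]
  have h1 : volume ((ball (0:E3) a \ {0}) ∩ ((fun k => p - k) ⁻¹' ball (0:E3) b))
      ≤ min (volume (ball (0:E3) a)) (volume (ball (0:E3) b)) := by
    refine le_min ?_ ?_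
    · exact measure_mono fun k hk => hk.1.1
    · refine le_trans (measure_mono fun k hk => hk.2) ?_
      rw [(Measure.measurePreserving_sub_left volume p).measure_preimage
        measurableSet_ball.nullMeasurableSet]
  refine h1.trans ?_
  rcases le_total a b with h | h
  · rw [min_eq_left (measure_mono (ball_subset_ball h)), min_eq_left h]
  · rw [min_eq_right (measure_mono (ball_subset_ball h)), min_eq_right h]

lemma layer (q : E3 → E3) (hq : Measurable q) :
    (∫⁻ k : E3, ENNReal.ofReal ((‖k‖^2)⁻¹) * ENNReal.ofReal ((‖q k‖^2 + 1)⁻¹))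
      = ∫⁻ st : ℝ × ℝ, volume {k : E3 | st.1 < (‖k‖^2)⁻¹ ∧ st.2 < (‖q k‖^2 + 1)⁻¹}
          ∂((volume.restrict (Ioi (0:ℝ))).prod (volume.restrict (Ioi (0:ℝ)))) := by
  set ρ : Measure ℝ := volume.restrict (Ioi (0:ℝ)) with hρ
  set T : Set (E3 × ℝ × ℝ) :=
      {x | x.2.1 < (‖x.1‖^2)⁻¹ ∧ x.2.2 < (‖q x.1‖^2 + 1)⁻¹} with hT
  have hu : Measurable fun k : E3 => (‖k‖^2)⁻¹ := (measurable_norm.pow_const 2).inv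
  have hv : Measurable fun k : E3 => (‖q k‖^2 + 1)⁻¹ := (((hq.norm).pow_const 2).add_const 1).inv
  have hTm : MeasurableSet T := by
    rw [hT, Set.setOf_and]
    exact (measurableSet_lt measurable_snd.fst (hu.comp measurable_fst)).inter
      (measurableSet_lt measurable_snd.snd (hv.comp measurable_fst))
  have hIio : ∀ c : ℝ, 0 ≤ c → ENNReal.ofReal c = ρ (Iio c) := by
    intro c hc
    rw [hρ, Measure.restrict_apply measurableSet_Iio, Set.Iio_inter_Ioi, Real.volume_Ioo,
      sub_zero]
  have key : ∀ k : E3, ENNReal.ofReal ((‖k‖^2)⁻¹) * ENNReal.ofReal ((‖q k‖^2 + 1)⁻¹)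
      = ∫⁻ st : ℝ × ℝ, T.indicator 1 (k, st) ∂(ρ.prod ρ) := by
    intro k
    rw [hIio _ (by positivity), hIio _ (by positivity), ← Measure.prod_prod,
      ← lintegral_indicator_one (measurableSet_Iio.prod measurableSet_Iio)]
    refine lintegral_congr fun st => ?_
    simp only [Set.indicator_apply, Set.mem_prod, Set.mem_Iio, hT, Set.mem_setOf_eq, Pi.one_apply]
  calc (∫⁻ k : E3, ENNReal.ofReal ((‖k‖^2)⁻¹) * ENNReal.ofReal ((‖q k‖^2 + 1)⁻¹))
      = ∫⁻ k : E3, ∫⁻ st : ℝ × ℝ, T.indicator 1 (k, st) ∂(ρ.prod ρ) :=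
        lintegral_congr key
    _ = ∫⁻ st : ℝ × ℝ, ∫⁻ k : E3, T.indicator 1 (k, st) ∂(volume) ∂(ρ.prod ρ) := by
        exact lintegral_lintegral_swap ((measurable_one.indicator hTm).aemeasurable)
    _ = ∫⁻ st : ℝ × ℝ, volume {k : E3 | st.1 < (‖k‖^2)⁻¹ ∧ st.2 < (‖q k‖^2 + 1)⁻¹}
          ∂(ρ.prod ρ) := by
        refine lintegral_congr fun st => ?_
        rw [show (fun k : E3 => T.indicator 1 (k, st))
            = ({k : E3 | st.1 < (‖k‖^2)⁻¹ ∧ st.2 < (‖q k‖^2 + 1)⁻¹}).indicator 1 from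
          funext fun k => by
            simp only [Set.indicator_apply, hT, Set.mem_setOf_eq, Pi.one_apply]]
        rw [Set.setOf_and]
        exact lintegral_indicator_one
          ((measurableSet_lt measurable_const hu).inter
            (measurableSet_lt measurable_const hv))

end RearrangementAux

/-- For every `p ∈ ℝ³`,
`∫ (|k|²(|p−k|²+1))⁻¹ dk ≤ ∫ (|k|²(|k|²+1))⁻¹ dk`, the latter being finite (= 2π²). -/
theorem rearrangement_integral_bound (p : E3) :
    (∫⁻ k : E3, ENNReal.ofReal ((‖k‖^2 * (‖p - k‖^2 + 1))⁻¹))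
      ≤ (∫⁻ k : E3, ENNReal.ofReal ((‖k‖^2 * (‖k‖^2 + 1))⁻¹)) ∧
    (∫⁻ k : E3, ENNReal.ofReal ((‖k‖^2 * (‖k‖^2 + 1))⁻¹)) = ENNReal.ofReal (2 * π^2) := by
  classical
  set ρ : Measure ℝ := volume.restrict (Set.Ioi (0:ℝ)) with hρ
  have key : ∀ q : E3 → E3, Measurable q →
      (∫⁻ k : E3, ENNReal.ofReal ((‖k‖^2 * (‖q k‖^2 + 1))⁻¹))
        = ∫⁻ st : ℝ × ℝ, volume {k : E3 | st.1 < (‖k‖^2)⁻¹ ∧ st.2 < (‖q k‖^2 + 1)⁻¹}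
            ∂(ρ.prod ρ) := by
    intro q hq
    rw [← layer q hq]
    exact lintegral_congr fun k => by rw [mul_inv, ENNReal.ofReal_mul (by positivity)]
  constructor
  · have hL := key (fun k => p - k) (measurable_const.sub measurable_id)
    have hR := key id measurable_id
    have hae : ∀ᵐ st : ℝ × ℝ ∂(ρ.prod ρ), st ∈ Set.Ioi (0:ℝ) ×ˢ Set.Ioi (0:ℝ) := by
      rw [hρ, Measure.prod_restrict]
      exact ae_restrict_mem (measurableSet_Ioi.prod measurableSet_Ioi)
    calc (∫⁻ k : E3, ENNReal.ofReal ((‖k‖^2 * (‖p - k‖^2 + 1))⁻¹))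
        = ∫⁻ st : ℝ × ℝ, volume {k : E3 | st.1 < (‖k‖^2)⁻¹ ∧ st.2 < (‖p - k‖^2 + 1)⁻¹}
            ∂(ρ.prod ρ) := hL
      _ ≤ ∫⁻ st : ℝ × ℝ, volume {k : E3 | st.1 < (‖k‖^2)⁻¹ ∧ st.2 < (‖k‖^2 + 1)⁻¹}
            ∂(ρ.prod ρ) := by
          refine lintegral_mono_ae ?_
          filter_upwards [hae] with st hst
          exact measure_inter_ball_le p hst.1 hst.2
      _ = (∫⁻ k : E3, ENNReal.ofReal ((‖k‖^2 * (‖k‖^2 + 1))⁻¹)) := hR.symm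
  · exact eval_rhs
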